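/- arXiv:0808.0660 — 4 statements merged into one kernel-verified Lean document; each statement's English description precedes it below -/
import Mathlib

section
/- For any site x, any direction e_m, and any coordinates k, ℓ ∈ {1,...,d}, the noise generator S satisfies S(π_x^k π_{x+e_m}^ℓ) = -(2 + 1/d²) π_x^k π_{x+e_m}^ℓ. -/
open scoped BigOperators

/-- Partial derivative of an observable `f` of the velocity field `π` with respect
to the coordinate `π_x^i`. -/
noncomputable def pder {d N : ℕ} [NeZero N] (x : Fin d → ZMod N) (i : Fin d)
    (f : ((Fin d → ZMod N) → Fin d → ℝ) → ℝ)
    (π : (Fin d → ZMod N) → Fin d → ℝ) : ℝ :=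
  fderiv ℝ f π (Pi.single x (Pi.single i 1))

/-- The vector field `Y^{i,j}_{x,x+e_k} = π^j_{x+e_k} ∂_{π^i_x} - π^i_x ∂_{π^j_{x+e_k}}`. -/
noncomputable def Yop {d N : ℕ} [NeZero N] (x : Fin d → ZMod N) (k i j : Fin d)
    (f : ((Fin d → ZMod N) → Fin d → ℝ) → ℝ)
    (π : (Fin d → ZMod N) → Fin d → ℝ) : ℝ :=
  π (x + Pi.single k 1) j * pder x i f π - π x i * pder (x + Pi.single k 1) j f π

section aux
variable {d N : ℕ} [NeZero N]

noncomputable def coordL (a : Fin d → ZMod N) (p : Fin d) :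
    ((Fin d → ZMod N) → Fin d → ℝ) →L[ℝ] ℝ :=
  (ContinuousLinearMap.proj (R := ℝ) (φ := fun _ : Fin d => ℝ) p).comp
    (ContinuousLinearMap.proj (R := ℝ) (φ := fun _ : Fin d → ZMod N => Fin d → ℝ) a)

@[simp] lemma coordL_apply (a : Fin d → ZMod N) (p : Fin d)
    (v : (Fin d → ZMod N) → Fin d → ℝ) : coordL a p v = v a p := rfl

lemma hasFDerivAt_mono (a b : Fin d → ZMod N) (p q : Fin d)
    (π : (Fin d → ZMod N) → Fin d → ℝ) :
    HasFDerivAt (fun π : (Fin d → ZMod N) → Fin d → ℝ => π a p * π b q)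
      (π a p • coordL b q + π b q • coordL a p) π :=
  ((coordL a p).hasFDerivAt (x := π)).mul ((coordL b q).hasFDerivAt (x := π))

noncomputable def ind (P : Prop) [Decidable P] : ℝ := if P then 1 else 0

noncomputable def sng (y : Fin d → ZMod N) (i : Fin d) (a : Fin d → ZMod N) (p : Fin d) : ℝ :=
  ind (a = y ∧ p = i)

lemma single_eval (y a : Fin d → ZMod N) (i p : Fin d) :
    (Pi.single y (Pi.single i (1:ℝ)) : (Fin d → ZMod N) → Fin d → ℝ) a p = sng y i a p := by
  simp only [sng, ind, Pi.single_apply, ite_and]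
  split_ifs <;> simp_all [Pi.single_apply]

lemma pder_mono (a b y : Fin d → ZMod N) (p q i : Fin d)
    (π : (Fin d → ZMod N) → Fin d → ℝ) :
    pder y i (fun π => π a p * π b q) π
      = π a p * sng y i b q + π b q * sng y i a p := by
  rw [pder, (hasFDerivAt_mono a b p q π).fderiv]
  simp [single_eval]
end aux

section aux2
variable {d N : ℕ} [NeZero N]

lemma Yop_mono (z : Fin d → ZMod N) (c i j : Fin d) (a b : Fin d → ZMod N) (p q : Fin d) :
    Yop z c i j (fun π => π a p * π b q)
      = fun π : (Fin d → ZMod N) → Fin d → ℝ =>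
        sng z i a p * (π (z + Pi.single c 1) j * π b q)
        + sng z i b q * (π (z + Pi.single c 1) j * π a p)
        - sng (z + Pi.single c 1) j a p * (π z i * π b q)
        - sng (z + Pi.single c 1) j b q * (π z i * π a p) := by
  funext π
  simp only [Yop, pder_mono]
  ring

lemma pder_quad (c1 c2 c3 c4 : ℝ) (v u a b y : Fin d → ZMod N) (jv iu p q i : Fin d)
    (π : (Fin d → ZMod N) → Fin d → ℝ) :
    pder y i (fun π => c1 * (π v jv * π b q) + c2 * (π v jv * π a p)
        - c3 * (π u iu * π b q) - c4 * (π u iu * π a p)) π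
      = c1 * (π v jv * sng y i b q + π b q * sng y i v jv)
      + c2 * (π v jv * sng y i a p + π a p * sng y i v jv)
      - c3 * (π u iu * sng y i b q + π b q * sng y i u iu)
      - c4 * (π u iu * sng y i a p + π a p * sng y i u iu) := by
  have h : HasFDerivAt (fun π : (Fin d → ZMod N) → Fin d → ℝ =>
      c1 * (π v jv * π b q) + c2 * (π v jv * π a p)
        - c3 * (π u iu * π b q) - c4 * (π u iu * π a p))
      (c1 • (π v jv • coordL b q + π b q • coordL v jv)
       + c2 • (π v jv • coordL a p + π a p • coordL v jv)
       - c3 • (π u iu • coordL b q + π b q • coordL u iu)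
       - c4 • (π u iu • coordL a p + π a p • coordL u iu)) π := by
    exact ((((hasFDerivAt_mono v b jv q π).const_mul c1).add
      ((hasFDerivAt_mono v a jv p π).const_mul c2)).sub
      ((hasFDerivAt_mono u b iu q π).const_mul c3)).sub
      ((hasFDerivAt_mono u a iu p π).const_mul c4)
  rw [pder, h.fderiv]
  simp [single_eval]
  ring
end aux2

variable {d N : ℕ} [NeZero N]

set_option maxRecDepth 16000 in
set_option maxHeartbeats 4000000 in
lemma Ysq_mono (hN : 3 ≤ N) (x z : Fin d → ZMod N) (m k ℓ c i j : Fin d)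
    (π : (Fin d → ZMod N) → Fin d → ℝ) :
    Yop z c i j (Yop z c i j (fun π => π x k * π (x + Pi.single m 1) ℓ)) π
      = -(ind (x = z ∧ k = i) + ind (x + Pi.single m 1 = z ∧ ℓ = i)
          + ind (x = z + Pi.single c 1 ∧ k = j)
          + ind (x + Pi.single m 1 = z + Pi.single c 1 ∧ ℓ = j)
          + 2 * ind (x = z ∧ k = i) * ind (x + Pi.single m 1 = z + Pi.single c 1 ∧ ℓ = j)
          + 2 * ind (x + Pi.single m 1 = z ∧ ℓ = i) * ind (x = z + Pi.single c 1 ∧ k = j))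
        * (π x k * π (x + Pi.single m 1) ℓ) := by
  have h2 : (1 : ZMod N) ≠ 0 := by
    haveI : Fact (1 < N) := ⟨by omega⟩
    exact one_ne_zero
  have hsc : Pi.single c (1 : ZMod N) ≠ (0 : Fin d → ZMod N) := by
    intro h
    have := congrFun h c
    simp at this
    exact h2 this
  have hsm : Pi.single m (1 : ZMod N) ≠ (0 : Fin d → ZMod N) := by
    intro h
    have := congrFun h m
    simp at this
    exact h2 this
  have hzz : z + Pi.single c 1 ≠ z := by
    simpa using hsc
  have hxx : x + Pi.single m 1 ≠ x := by
    simpa using hsm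
  rw [Yop_mono]
  rw [Yop]
  rw [pder_quad, pder_quad]
  have hzz2 : z ≠ z + Pi.single c 1 := fun h => hzz h.symm
  simp only [sng, ind, ite_and, hzz, hzz2, if_false, if_true, eq_self_iff_true,
    mul_zero, zero_mul, mul_one, one_mul, add_zero, zero_add, sub_zero, zero_sub]
  split_ifs <;> subst_vars
  all_goals try contradiction
  all_goals try ring
  all_goals simp_all
  all_goals ring

section sums
variable {α : Type*} [Fintype α] [DecidableEq α]

lemma ind_congr {P Q : Prop} [Decidable P] [Decidable Q] (h : P ↔ Q) : ind P = ind Q := by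
  unfold ind; exact if_congr h rfl rfl

lemma ind_of_not {P : Prop} [Decidable P] (h : ¬ P) : ind P = 0 := by simp [ind, h]

lemma sum_ind_eq (a : α) (P : Prop) [Decidable P] :
    ∑ z : α, ind (a = z ∧ P) = ind P := by
  simp [ind, ite_and, Finset.sum_ite_eq]

lemma sum_ind_mul (a : α) (P : Prop) [Decidable P] (g : α → ℝ) :
    ∑ z : α, ind (a = z ∧ P) * g z = ind P * g a := by
  simp [ind, ite_and, ite_mul, zero_mul, Finset.sum_ite_eq]

lemma sum_ind_shift [AddGroup α] (s a : α) (P : Prop) [Decidable P] :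
    ∑ z : α, ind (a = z + s ∧ P) = ind P := by
  rw [Fintype.sum_equiv (Equiv.addRight s) (fun z => ind (a = z + s ∧ P))
    (fun w => ind (a = w ∧ P)) (fun z => rfl)]
  exact sum_ind_eq a P

lemma sum_const_real (r : ℝ) (dd : ℕ) : ∑ _ : Fin dd, r = dd * r := by
  simp [Finset.sum_const, mul_comm]

end sums

lemma sum_ind_single_mul {α : Type*} [Fintype α] [DecidableEq α] (a : α) (g : α → ℝ) :
    ∑ z : α, ind (a = z) * g z = g a := by
  simp [ind, ite_mul, zero_mul, one_mul, Finset.sum_ite_eq]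

/-- The noise generator `S = (1/(2d²)) Σ_{i,j,k} Σ_x (Y^{i,j}_{x,x+e_k})²`. -/
noncomputable def Sop {d N : ℕ} [NeZero N]
    (f : ((Fin d → ZMod N) → Fin d → ℝ) → ℝ)
    (π : (Fin d → ZMod N) → Fin d → ℝ) : ℝ :=
  (1 / (2 * (d : ℝ) ^ 2)) *
    ∑ i : Fin d, ∑ j : Fin d, ∑ k : Fin d, ∑ x : Fin d → ZMod N,
      Yop x k i j (Yop x k i j f) π

/-- `S(π_x^k π_{x+e_m}^ℓ) = -(2 + 1/d²) π_x^k π_{x+e_m}^ℓ`. -/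
theorem S_cross (d N : ℕ) [NeZero N] (hd : 0 < d) (hN : 3 ≤ N) (x : Fin d → ZMod N)
    (m k ℓ : Fin d) :
    Sop (fun π => π x k * π (x + Pi.single m 1) ℓ)
      = fun π : (Fin d → ZMod N) → Fin d → ℝ =>
          -(2 + 1 / (d : ℝ) ^ 2) * (π x k * π (x + Pi.single m 1) ℓ) := by
  funext π
  have h2 : (1 : ZMod N) ≠ 0 := by
    haveI : Fact (1 < N) := ⟨by omega⟩
    exact one_ne_zero
  have h2' : (2 : ZMod N) ≠ 0 := by
    have : ((2:ℕ) : ZMod N) ≠ 0 := by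
      rw [Ne, ZMod.natCast_eq_zero_iff]
      intro h
      have := Nat.le_of_dvd (by norm_num) h
      omega
    simpa using this
  have hmc : ∀ c' : Fin d, (x + Pi.single m 1 = x + Pi.single c' 1) ↔ m = c' := by
    intro c'
    rw [add_right_inj]
    constructor
    · intro h
      by_contra hne
      have := congrFun h m
      simp [Pi.single_apply, Ne.symm hne] at this
      exact h2 this
    · rintro rfl; rfl
  have hxf : ∀ c' : Fin d, ¬ (x = x + Pi.single m 1 + Pi.single c' 1) := by
    intro c' h
    rw [add_assoc, left_eq_add] at h
    by_cases hcm : c' = m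
    · subst hcm
      have := congrFun h c'
      simp at this
      have h22 : (2 : ZMod N) = 0 := by
        rw [← one_add_one_eq_two]; exact this
      exact h2' h22
    · have := congrFun h m
      simp [Pi.single_apply, Ne.symm hcm, hcm] at this
      exact h2 this
  have hz : ∀ i j c : Fin d,
      ∑ z : Fin d → ZMod N,
        Yop z c i j (Yop z c i j (fun π => π x k * π (x + Pi.single m 1) ℓ)) π
      = -(ind (k = i) + ind (ℓ = i) + ind (k = j) + ind (ℓ = j)
          + 2 * ind (k = i) * ind (m = c ∧ ℓ = j))
        * (π x k * π (x + Pi.single m 1) ℓ) := by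
    intro i j c
    rw [Finset.sum_congr rfl (fun z _ => Ysq_mono hN x z m k ℓ c i j π)]
    rw [← Finset.sum_mul]
    congr 1
    have s5 : ∑ z : Fin d → ZMod N,
        (2 * ind (x = z ∧ k = i) * ind (x + Pi.single m 1 = z + Pi.single c 1 ∧ ℓ = j))
        = 2 * ind (k = i) * ind (m = c ∧ ℓ = j) := by
      have hre : ∀ z : Fin d → ZMod N,
          2 * ind (x = z ∧ k = i) * ind (x + Pi.single m 1 = z + Pi.single c 1 ∧ ℓ = j)
            = ind (x = z ∧ k = i)
              * (2 * ind (x + Pi.single m 1 = z + Pi.single c 1 ∧ ℓ = j)) := fun z => by ring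
      rw [Finset.sum_congr rfl fun z _ => hre z, sum_ind_mul,
        ind_congr (and_congr_left' (hmc c))]
      ring
    have s6 : ∑ z : Fin d → ZMod N,
        (2 * ind (x + Pi.single m 1 = z ∧ ℓ = i) * ind (x = z + Pi.single c 1 ∧ k = j))
        = 0 := by
      have hre : ∀ z : Fin d → ZMod N,
          2 * ind (x + Pi.single m 1 = z ∧ ℓ = i) * ind (x = z + Pi.single c 1 ∧ k = j)
            = ind (x + Pi.single m 1 = z ∧ ℓ = i)
              * (2 * ind (x = z + Pi.single c 1 ∧ k = j)) := fun z => by ring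
      rw [Finset.sum_congr rfl fun z _ => hre z, sum_ind_mul,
        ind_of_not (P := (x = x + Pi.single m 1 + Pi.single c 1 ∧ k = j)) (fun hh => hxf c hh.1)]
      ring
    rw [Finset.sum_neg_distrib]
    congr 1
    rw [Finset.sum_add_distrib, Finset.sum_add_distrib, Finset.sum_add_distrib,
      Finset.sum_add_distrib, Finset.sum_add_distrib,
      sum_ind_eq, sum_ind_eq, sum_ind_shift, sum_ind_shift, s5, s6]
    ring
  simp only [Sop]
  rw [Finset.sum_congr rfl fun i _ => Finset.sum_congr rfl fun j _ =>
    Finset.sum_congr rfl fun c _ => hz i j c]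
  simp only [← Finset.sum_mul]
  have hc : ∀ i j : Fin d, ∑ c : Fin d,
      -(ind (k = i) + ind (ℓ = i) + ind (k = j) + ind (ℓ = j)
        + 2 * ind (k = i) * ind (m = c ∧ ℓ = j))
      = -((d:ℝ) * (ind (k = i) + ind (ℓ = i) + ind (k = j) + ind (ℓ = j))
          + 2 * ind (k = i) * ind (ℓ = j)) := by
    intro i j
    have hre : ∀ c : Fin d, -(ind (k = i) + ind (ℓ = i) + ind (k = j) + ind (ℓ = j)
        + 2 * ind (k = i) * ind (m = c ∧ ℓ = j))
        = ind (m = c ∧ ℓ = j) * (-(2 * ind (k = i)))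
          + (-(ind (k = i) + ind (ℓ = i) + ind (k = j) + ind (ℓ = j))) := fun c => by ring
    rw [Finset.sum_congr rfl fun c _ => hre c, Finset.sum_add_distrib, sum_ind_mul,
      sum_const_real]
    ring
  rw [Finset.sum_congr rfl fun i _ => Finset.sum_congr rfl fun j _ => hc i j]
  have hj : ∀ i : Fin d, ∑ j : Fin d,
      -((d:ℝ) * (ind (k = i) + ind (ℓ = i) + ind (k = j) + ind (ℓ = j))
        + 2 * ind (k = i) * ind (ℓ = j))
      = -((d:ℝ)^2 * ind (k = i) + (d:ℝ)^2 * ind (ℓ = i) + 2*(d:ℝ) + 2 * ind (k = i)) := by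
    intro i
    have hre : ∀ j : Fin d, -((d:ℝ) * (ind (k = i) + ind (ℓ = i) + ind (k = j) + ind (ℓ = j))
        + 2 * ind (k = i) * ind (ℓ = j))
        = ind (k = j) * (-(d:ℝ)) + (ind (ℓ = j) * (-((d:ℝ) + 2 * ind (k = i)))
          + (-((d:ℝ) * ind (k = i) + (d:ℝ) * ind (ℓ = i)))) := fun j => by ring
    rw [Finset.sum_congr rfl fun j _ => hre j, Finset.sum_add_distrib, Finset.sum_add_distrib,
      sum_ind_single_mul, sum_ind_single_mul, sum_const_real]
    ring
  rw [Finset.sum_congr rfl fun i _ => hj i]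
  have hi : ∑ i : Fin d,
      -((d:ℝ)^2 * ind (k = i) + (d:ℝ)^2 * ind (ℓ = i) + 2*(d:ℝ) + 2 * ind (k = i))
      = -(4*(d:ℝ)^2 + 2) := by
    have hre : ∀ i : Fin d,
        -((d:ℝ)^2 * ind (k = i) + (d:ℝ)^2 * ind (ℓ = i) + 2*(d:ℝ) + 2 * ind (k = i))
        = ind (k = i) * (-((d:ℝ)^2 + 2)) + (ind (ℓ = i) * (-(d:ℝ)^2) + (-(2*(d:ℝ)))) :=
      fun i => by ring
    rw [Finset.sum_congr rfl fun i _ => hre i, Finset.sum_add_distrib,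
      Finset.sum_add_distrib, sum_ind_single_mul, sum_ind_single_mul, sum_const_real]
    ring
  rw [hi]
  have hd0 : ((d:ℝ)) ≠ 0 := Nat.cast_ne_zero.mpr hd.ne'
  field_simp
  ring
end

section
/- The total Hamiltonian current J = Σ_{x ∈ T_N^d} (1/√m_x) π_x · (q_{x+e_1} - q_{x-e_1}) is an eigenfunction of the noise generator S with eigenvalue -1: S J = -J. -/
open scoped BigOperators

section aux
variable {d N : ℕ} [NeZero N]

noncomputable def La (a : (Fin d → ZMod N) → Fin d → ℝ) :
    ((Fin d → ZMod N) → Fin d → ℝ) →L[ℝ] ℝ :=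
  ∑ x : Fin d → ZMod N, ∑ i : Fin d,
    a x i • ((ContinuousLinearMap.proj i : (Fin d → ℝ) →L[ℝ] ℝ).comp
      (ContinuousLinearMap.proj x))

lemma La_apply (a : (Fin d → ZMod N) → Fin d → ℝ) (π : (Fin d → ZMod N) → Fin d → ℝ) :
    La a π = ∑ x, ∑ i, π x i * a x i := by
  simp [La, mul_comm]

lemma pder_La (a : (Fin d → ZMod N) → Fin d → ℝ) (x : Fin d → ZMod N) (i : Fin d)
    (π : (Fin d → ZMod N) → Fin d → ℝ) :
    pder x i (⇑(La a)) π = a x i := by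
  rw [pder, (La a).fderiv, La_apply]
  simp [Pi.single_apply, ite_apply, Finset.sum_ite_eq']

lemma Yop_La (a : (Fin d → ZMod N) → Fin d → ℝ) (x : Fin d → ZMod N) (k i j : Fin d)
    (π : (Fin d → ZMod N) → Fin d → ℝ) :
    Yop x k i j (⇑(La a)) π
      = π (x + Pi.single k 1) j * a x i - π x i * a (x + Pi.single k 1) j := by
  simp [Yop, pder_La]

/-- The coefficient function of `Y (La a)`. -/
noncomputable def bcoef (a : (Fin d → ZMod N) → Fin d → ℝ) (x : Fin d → ZMod N)
    (k i j : Fin d) : (Fin d → ZMod N) → Fin d → ℝ :=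
  fun y l => (if y = x + Pi.single k 1 ∧ l = j then a x i else 0)
    - (if y = x ∧ l = i then a (x + Pi.single k 1) j else 0)

lemma Yop_La_eq (a : (Fin d → ZMod N) → Fin d → ℝ) (x : Fin d → ZMod N) (k i j : Fin d) :
    Yop x k i j (⇑(La a)) = ⇑(La (bcoef a x k i j)) := by
  funext π
  rw [Yop_La, La_apply]
  simp only [bcoef, mul_sub, Finset.sum_sub_distrib]
  congr 1 <;> simp [mul_ite, mul_zero, ite_and, Finset.sum_ite_eq']

lemma Y2_La (a : (Fin d → ZMod N) → Fin d → ℝ) (x : Fin d → ZMod N) (k i j : Fin d)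
    (π : (Fin d → ZMod N) → Fin d → ℝ) (hne : x + Pi.single k 1 ≠ x) :
    Yop x k i j (Yop x k i j (⇑(La a))) π
      = -(π (x + Pi.single k 1) j * a (x + Pi.single k 1) j + π x i * a x i) := by
  rw [Yop_La_eq, Yop_La]
  have h1 : bcoef a x k i j x i = -(a (x + Pi.single k 1) j) := by
    simp [bcoef, hne.symm]
  have h2 : bcoef a x k i j (x + Pi.single k 1) j = a x i := by
    simp [bcoef, hne]
  rw [h1, h2]; ring

end aux

/-- the total Hamiltonian current
`J = Σ_x (1/√m_x) π_x · (q_{x+e_1} - q_{x-e_1})` satisfies `S J = -J`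
(`S` acts on the `π` variables only, the positions `q` being fixed). -/
theorem S_total_current (d N : ℕ) [NeZero N] (hd : 0 < d) (hN : 3 ≤ N)
    (m : (Fin d → ZMod N) → ℝ) (hm : ∀ x, 0 < m x)
    (q : (Fin d → ZMod N) → Fin d → ℝ) :
    Sop (fun π : (Fin d → ZMod N) → Fin d → ℝ =>
        ∑ x, (1 / Real.sqrt (m x)) *
          ∑ i, π x i * (q (x + Pi.single (⟨0, hd⟩ : Fin d) 1) i
                          - q (x - Pi.single (⟨0, hd⟩ : Fin d) 1) i))
      = fun π : (Fin d → ZMod N) → Fin d → ℝ =>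
        -(∑ x, (1 / Real.sqrt (m x)) *
          ∑ i, π x i * (q (x + Pi.single (⟨0, hd⟩ : Fin d) 1) i
                          - q (x - Pi.single (⟨0, hd⟩ : Fin d) 1) i)) := by
  set e1 : Fin d → ZMod N := Pi.single (⟨0, hd⟩ : Fin d) 1 with he1
  set a : (Fin d → ZMod N) → Fin d → ℝ :=
    fun x i => (1 / Real.sqrt (m x)) * (q (x + e1) i - q (x - e1) i) with ha
  have hJ : (fun π : (Fin d → ZMod N) → Fin d → ℝ =>
        ∑ x, (1 / Real.sqrt (m x)) *
          ∑ i, π x i * (q (x + e1) i - q (x - e1) i))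
      = ⇑(La a) := by
    funext π
    rw [La_apply]
    refine Finset.sum_congr rfl fun x _ => ?_
    rw [Finset.mul_sum]
    exact Finset.sum_congr rfl fun i _ => by rw [ha]; ring
  rw [hJ]
  have hone : (1 : ZMod N) ≠ 0 := by
    haveI : Fact (1 < N) := ⟨by omega⟩
    exact one_ne_zero
  have hne : ∀ k : Fin d, ∀ x : Fin d → ZMod N, x + Pi.single k 1 ≠ x := by
    intro k x h
    have := congrFun h k
    simp only [Pi.add_apply, Pi.single_eq_same] at this
    exact hone (add_eq_left.mp this)
  funext π
  rw [Sop, congrFun hJ π, La_apply]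
  have hd' : (d : ℝ) ≠ 0 := Nat.cast_ne_zero.mpr hd.ne'
  have key : ∀ i j k : Fin d,
      ∑ x : Fin d → ZMod N, Yop x k i j (Yop x k i j (⇑(La a))) π
        = -((∑ x, π x j * a x j) + ∑ x, π x i * a x i) := by
    intro i j k
    have : ∀ x : Fin d → ZMod N, Yop x k i j (Yop x k i j (⇑(La a))) π
        = -(π (x + Pi.single k 1) j * a (x + Pi.single k 1) j + π x i * a x i) :=
      fun x => Y2_La a x k i j π (hne k x)
    simp only [this]
    have hshift : ∑ x : Fin d → ZMod N, π (x + Pi.single k 1) j * a (x + Pi.single k 1) j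
        = ∑ x, π x j * a x j :=
      Fintype.sum_equiv (Equiv.addRight (Pi.single k 1)) _ _ (fun x => rfl)
    simp only [neg_add, Finset.sum_add_distrib, Finset.sum_neg_distrib, hshift]
  simp only [key]
  have hsum : ∑ i : Fin d, ∑ j : Fin d, ∑ k : Fin d,
      -((∑ x, π x j * a x j) + ∑ x, π x i * a x i)
      = -(2 * (d : ℝ) ^ 2 * ∑ i : Fin d, ∑ x, π x i * a x i) := by
    simp only [Finset.sum_const, Finset.card_univ, Fintype.card_fin, nsmul_eq_mul,
      neg_add, mul_add, mul_neg, Finset.sum_add_distrib, Finset.sum_neg_distrib,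
      ← Finset.mul_sum]
    ring
  rw [hsum]
  have hAi : ∑ x : Fin d → ZMod N, ∑ i, π x i * a x i
      = ∑ i : Fin d, ∑ x, π x i * a x i := Finset.sum_comm
  rw [hAi]
  field_simp
end

section
/- Let H be a real Hilbert space, S a bounded nonpositive self-adjoint operator, A a bounded antisymmetric operator, L = A + γS with γ > 0, and λ > 0. Then for any f ∈ H, <f, (λ - L)^{-1} f> = sup_u { 2<u, f> - <u, (λ - γS)u> - <Au, (λ - γS)^{-1} Au> }, where the supremum is over u ∈ H (assuming λ - γS is boundedly invertible, which holds since λ > 0). -/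
open scoped RealInnerProductSpace

/-- variational formula for the resolvent quadratic form.
Here `R = (λ - L)⁻¹` and `Rs = (λ - γS)⁻¹` are characterized as two-sided
inverses, `S` is self-adjoint nonpositive and `A` antisymmetric. -/
theorem resolvent_variational_formula {H : Type*} [NormedAddCommGroup H]
    [InnerProductSpace ℝ H] [CompleteSpace H]
    (S A : H →L[ℝ] H) (hS : IsSelfAdjoint S) (hSneg : ∀ u : H, ⟪S u, u⟫ ≤ 0)
    (hA : ∀ u v : H, ⟪A u, v⟫ = -⟪u, A v⟫)
    (γ lam : ℝ) (hγ : 0 < γ) (hlam : 0 < lam)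
    (R Rs : H →L[ℝ] H)
    (hR1 : ∀ v, lam • R v - (A (R v) + γ • S (R v)) = v)
    (hR2 : ∀ v, R (lam • v - (A v + γ • S v)) = v)
    (hRs1 : ∀ v, lam • Rs v - γ • S (Rs v) = v)
    (hRs2 : ∀ v, Rs (lam • v - γ • S v) = v)
    (f : H) :
    IsLUB {r : ℝ | ∃ u : H,
        r = 2 * ⟪u, f⟫ - ⟪u, lam • u - γ • S u⟫ - ⟪A u, Rs (A u)⟫}
      ⟪f, R f⟫ := by
  have hSsym : ∀ u v : H, ⟪S u, v⟫ = ⟪u, S v⟫ := fun u v => hS.isSymmetric u v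
  have hBsym : ∀ u v : H, ⟪lam • u - γ • S u, v⟫ = ⟪u, lam • v - γ • S v⟫ := by
    intro u v
    simp [inner_sub_left, inner_sub_right, inner_smul_left, inner_smul_right,
      hSsym u v, real_inner_comm u v]
  have hAzero : ∀ u : H, ⟪A u, u⟫ = 0 := by
    intro u
    have h := hA u u
    have h2 : ⟪u, A u⟫ = ⟪A u, u⟫ := real_inner_comm _ _
    linarith
  have hBpos : ∀ w : H, 0 ≤ ⟪w, lam • w - γ • S w⟫ := by
    intro w
    have h1 : ⟪w, lam • w - γ • S w⟫ = lam * ⟪w, w⟫ - γ * ⟪S w, w⟫ := by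
      simp [inner_sub_right, inner_smul_right, real_inner_comm w (S w)]
    have h2 : (0:ℝ) ≤ ⟪w, w⟫ := real_inner_self_nonneg
    nlinarith [hSneg w]
  have hRsSym : ∀ x y : H, ⟪Rs x, y⟫ = ⟪x, Rs y⟫ := by
    intro x y
    calc ⟪Rs x, y⟫ = ⟪Rs x, lam • Rs y - γ • S (Rs y)⟫ := by rw [hRs1]
      _ = ⟪lam • Rs x - γ • S (Rs x), Rs y⟫ := (hBsym _ _).symm
      _ = ⟪x, Rs y⟫ := by rw [hRs1]
  have hRsPos : ∀ x : H, 0 ≤ ⟪x, Rs x⟫ := by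
    intro x
    have h1 : ⟪x, Rs x⟫ = ⟪lam • Rs x - γ • S (Rs x), Rs x⟫ := by rw [hRs1]
    rw [h1, real_inner_comm]
    exact hBpos _
  set g : H := ContinuousLinearMap.adjoint R f with hgdef
  have hg : ∀ v : H, ⟪g, v⟫ = ⟪f, R v⟫ := fun v =>
    ContinuousLinearMap.adjoint_inner_left R v f
  have hgf : (lam • g - γ • S g) + A g = f := by
    apply ext_inner_right ℝ
    intro v
    have h1 : ⟪A g, v⟫ = -⟪g, A v⟫ := hA g v
    have h2 : ⟪lam • g - γ • S g, v⟫ = ⟪g, lam • v - γ • S v⟫ := hBsym g v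
    have h3 : lam • v - (A v + γ • S v) = (lam • v - γ • S v) - A v := by abel
    have h4 : ⟪g, (lam • v - γ • S v) - A v⟫ = ⟪f, v⟫ := by
      rw [← h3, hg, hR2]
    rw [inner_sub_right] at h4
    rw [inner_add_left, h1, h2]
    linarith
  set u0 : H := R (lam • g - γ • S g) with hu0def
  have hBmA : lam • u0 - γ • S u0 - A u0 = lam • g - γ • S g := by
    have h := hR1 (lam • g - γ • S g)
    rw [show lam • u0 - γ • S u0 - A u0
        = lam • R (lam • g - γ • S g) - (A (R (lam • g - γ • S g))
          + γ • S (R (lam • g - γ • S g))) from by rw [← hu0def]; abel]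
    exact h
  have hAu0 : A u0 = lam • (u0 - g) - γ • S (u0 - g) := by
    have h' : A u0 = (lam • u0 - γ • S u0) - (lam • g - γ • S g) := by
      rw [← hBmA]; abel
    rw [map_sub, smul_sub, smul_sub, h']
    abel
  have hRsA : Rs (A u0) = u0 - g := by rw [hAu0]; exact hRs2 _
  have hT : lam • u0 - γ • S u0 - A (Rs (A u0)) = f := by
    rw [hRsA, map_sub, ← hgf, ← hBmA]
    abel
  -- the symmetric bilinear form
  set t : H → H → ℝ := fun u w => ⟪u, lam • w - γ • S w⟫ + ⟪A u, Rs (A w)⟫ with htdef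
  have hcross : ∀ u w : H, ⟪A u, Rs (A w)⟫ = ⟪A w, Rs (A u)⟫ := by
    intro u w
    rw [← hRsSym (A w) (A u)]
    exact real_inner_comm _ _
  have htsym : ∀ u w : H, t u w = t w u := by
    intro u w
    have c1 : ⟪u, lam • w - γ • S w⟫ = ⟪w, lam • u - γ • S u⟫ := by
      rw [real_inner_comm]
      exact hBsym w u
    simp only [htdef]
    rw [c1, hcross]
  have htpos : ∀ v : H, 0 ≤ t v v := by
    intro v
    simp only [htdef]
    have := hBpos v
    have := hRsPos (A v)
    linarith
  have htf : ∀ u : H, ⟪u, f⟫ = t u u0 := by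
    intro u
    rw [← hT, inner_sub_right]
    have h1 : ⟪A u, Rs (A u0)⟫ = -⟪u, A (Rs (A u0))⟫ := hA u (Rs (A u0))
    simp only [htdef]
    linarith
  have hval : ⟪f, R f⟫ = t u0 u0 := by
    have h1 : ⟪f, R f⟫ = ⟪g, f⟫ := (hg f).symm
    have h2 : ⟪g, f⟫ = ⟪g, lam • g - γ • S g⟫ + ⟪g, A g⟫ := by
      rw [← hgf, inner_add_right]
    have h3 : ⟪g, A g⟫ = 0 := by
      have := hA g g
      have := hAzero g
      linarith
    have h4 : ⟪u0, f⟫ = ⟪f, u0⟫ := real_inner_comm _ _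
    have h5 : ⟪f, u0⟫ = ⟪g, lam • g - γ • S g⟫ := by
      rw [hu0def, ← hg]
    rw [h1, h2, h3, ← htf u0, h4, h5]
    ring
  -- expansion of t on differences
  have hexp : ∀ u : H, t (u - u0) (u - u0) = t u u - 2 * t u u0 + t u0 u0 := by
    intro u
    have h1 : lam • (u - u0) - γ • S (u - u0)
        = (lam • u - γ • S u) - (lam • u0 - γ • S u0) := by
      rw [map_sub, smul_sub, smul_sub]; abel
    have h2 : A (u - u0) = A u - A u0 := map_sub _ _ _
    have h3 : Rs (A u - A u0) = Rs (A u) - Rs (A u0) := map_sub _ _ _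
    have e1 : ⟪u0, u⟫ = ⟪u, u0⟫ := real_inner_comm _ _
    have e2 : ⟪u0, S u⟫ = ⟪u, S u0⟫ := by
      rw [← hSsym u0 u]
      exact real_inner_comm _ _
    have e3 : ⟪A u0, Rs (A u)⟫ = ⟪A u, Rs (A u0)⟫ := hcross u0 u
    simp only [htdef, map_sub, smul_sub, inner_sub_left, inner_sub_right,
      real_inner_smul_right]
    rw [e1, e2, e3]
    ring
  constructor
  · rintro r ⟨u, rfl⟩
    have hFu : 2 * ⟪u, f⟫ - ⟪u, lam • u - γ • S u⟫ - ⟪A u, Rs (A u)⟫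
        = 2 * t u u0 - t u u := by
      rw [htf u]; simp only [htdef]; ring
    have := hexp u
    have := htpos (u - u0)
    rw [hFu, hval]
    linarith
  · intro b hb
    have hmem : ⟪f, R f⟫ ∈ {r : ℝ | ∃ u : H,
        r = 2 * ⟪u, f⟫ - ⟪u, lam • u - γ • S u⟫ - ⟪A u, Rs (A u)⟫} := by
      refine ⟨u0, ?_⟩
      rw [htf u0, hval]
      simp only [htdef]
      ring
    exact hb hmem
end

section
/- Let H be a real Hilbert space, S bounded self-adjoint nonpositive, A bounded antisymmetric, L = A + γS with γ > 0, λ > 0, and f ∈ H with S f = -f. Then <f, (λ - L)^{-1} f> ≤ <f, f>/(λ + γ). -/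
/-!
Let `T = λ - γS`, a positive operator, and `u = R f`. Since `A` is antisymmetric,
`⟪f, u⟫ = ⟪T u, u⟫`, and since `S f = -f`, `f = T g` with `g = f / (λ + γ)`.
Expanding `0 ≤ ⟪T (g - u), g - u⟫` then gives `⟪f, u⟫ ≤ ⟪T g, g⟫ = ⟪f, f⟫ / (λ + γ)`.
-/

open scoped RealInnerProductSpace

namespace ContinuousLinearMap

variable {H : Type*} [NormedAddCommGroup H] [InnerProductSpace ℝ H]

lemma real_inner_apply_self_eq_zero_of_skew {A : H →L[ℝ] H}
    (hA : ∀ u v : H, ⟪A u, v⟫ = -⟪u, A v⟫) (u : H) : ⟪A u, u⟫ = 0 := by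
  have h := hA u u
  rw [real_inner_comm u] at h ⊢
  linarith

lemma IsPositive.real_inner_apply_self_le_of_inner_eq {T : H →L[ℝ] H} (hT : T.IsPositive)
    {g u : H} (h : ⟪T g, u⟫ = ⟪T u, u⟫) : ⟪T u, u⟫ ≤ ⟪T g, g⟫ := by
  have hnonneg := hT.inner_nonneg_left (g - u)
  have hsymm : ⟪T u, g⟫ = ⟪T g, u⟫ := by
    rw [hT.inner_left_eq_inner_right, real_inner_comm]
  simp only [map_sub, inner_sub_left, inner_sub_right] at hnonneg
  linarith

lemma isPositive_smul_one_sub_smul {S : H →L[ℝ] H} (hS : S.IsSymmetric)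
    (hSneg : ∀ u : H, ⟪S u, u⟫ ≤ 0) {lam γ : ℝ} (hlam : 0 ≤ lam) (hγ : 0 ≤ γ) :
    (lam • (1 : H →L[ℝ] H) - γ • S).IsPositive := by
  have hnegS : (-S).IsPositive := by
    refine (isPositive_iff _).mpr ⟨?_, fun u => ?_⟩
    · intro x y
      simpa using congrArg Neg.neg (hS x y)
    · simpa using hSneg u
  simpa [sub_eq_add_neg] using
    (isPositive_one.smul_of_nonneg hlam).add (hnegS.smul_of_nonneg hγ)

end ContinuousLinearMap

open ContinuousLinearMap in
theorem resolvent_upper_bound_general {H : Type*} [NormedAddCommGroup H]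
    [InnerProductSpace ℝ H] [CompleteSpace H]
    (S A : H →L[ℝ] H) (hS : IsSelfAdjoint S) (hSneg : ∀ u : H, ⟪S u, u⟫ ≤ 0)
    (hA : ∀ u v : H, ⟪A u, v⟫ = -⟪u, A v⟫)
    (γ lam : ℝ) (hγ : 0 < γ) (hlam : 0 < lam)
    (R : H →L[ℝ] H)
    (hR1 : ∀ v, lam • R v - (A (R v) + γ • S (R v)) = v)
    (f : H) (hf : S f = -f) :
    ⟪f, R f⟫ ≤ ⟪f, f⟫ / (lam + γ) := by
  set T : H →L[ℝ] H := lam • 1 - γ • S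
  have hT : T.IsPositive :=
    isPositive_smul_one_sub_smul hS.isSymmetric hSneg hlam.le hγ.le
  have hfu : ⟪f, R f⟫ = ⟪T (R f), R f⟫ :=
    calc ⟪f, R f⟫ = ⟪lam • R f - (A (R f) + γ • S (R f)), R f⟫ := by rw [hR1]
      _ = ⟪T (R f), R f⟫ := by
        simp [T, inner_sub_left, inner_add_left, real_inner_apply_self_eq_zero_of_skew hA]
  have hne : lam + γ ≠ 0 := by positivity
  have hTg : T ((lam + γ)⁻¹ • f) = f := by
    simp [T, hf, smul_smul, ← add_smul, inv_mul_cancel₀ hne]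
  calc ⟪f, R f⟫ = ⟪T (R f), R f⟫ := hfu
    _ ≤ ⟪T ((lam + γ)⁻¹ • f), (lam + γ)⁻¹ • f⟫ :=
      hT.real_inner_apply_self_le_of_inner_eq (by rw [hTg, hfu])
    _ = ⟪f, f⟫ / (lam + γ) := by rw [hTg, real_inner_smul_right, div_eq_inv_mul]

/-- if `S f = -f` then the resolvent quadratic form is bounded by
`<f,f>/(λ+γ)`. Here `R = (λ - L)⁻¹` with `L = A + γS`. -/
theorem resolvent_upper_bound {H : Type*} [NormedAddCommGroup H]
    [InnerProductSpace ℝ H] [CompleteSpace H]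
    (S A : H →L[ℝ] H) (hS : IsSelfAdjoint S) (hSneg : ∀ u : H, ⟪S u, u⟫ ≤ 0)
    (hA : ∀ u v : H, ⟪A u, v⟫ = -⟪u, A v⟫)
    (γ lam : ℝ) (hγ : 0 < γ) (hlam : 0 < lam)
    (R : H →L[ℝ] H)
    (hR1 : ∀ v, lam • R v - (A (R v) + γ • S (R v)) = v)
    (hR2 : ∀ v, R (lam • v - (A v + γ • S v)) = v)
    (f : H) (hf : S f = -f) :
    ⟪f, R f⟫ ≤ ⟪f, f⟫ / (lam + γ) :=
  resolvent_upper_bound_general S A hS hSneg hA γ lam hγ hlam R hR1 f hf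
end
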